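/- arXiv:1003.5681 — 3 statements merged into one kernel-verified Lean document; each statement's English description precedes it below -/
import Mathlib

section
/- Let (L,v) be a valued field and K a dense subfield. If A ⊆ K is an additive complement of the valuation ring of (K,v), then A is also an additive complement of the valuation ring of (L,v). -/
/-- `K` is dense in `(L,v)`: for every `a ∈ L` and every value `v c` (`c ≠ 0`),
there is `b ∈ K` with `v (a - b) ≤ v c`. -/
def Valuation.DenseSubfield {L : Type*} [Field L] {Γ₀ : Type*}
    [LinearOrderedCommGroupWithZero Γ₀] (v : Valuation L Γ₀) (K : Subfield L) : Prop :=
  ∀ a c : L, c ≠ 0 → ∃ b ∈ K, v (a - b) ≤ v c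

theorem additive_complement_of_dense_general {L : Type*} [Field L] {Γ₀ : Type*}
    [LinearOrderedCommGroupWithZero Γ₀] (v : Valuation L Γ₀) (K : Subfield L)
    (hd : v.DenseSubfield K) (A : AddSubgroup L)
    (hA₁ : ∀ x ∈ A, v x ≤ 1 → x = 0)
    (hA₂ : ∀ b ∈ K, ∃ x ∈ A, v (b - x) ≤ 1) :
    (∀ x ∈ A, v x ≤ 1 → x = 0) ∧ (∀ a : L, ∃ x ∈ A, v (a - x) ≤ 1) := by
  refine ⟨hA₁, fun a => ?_⟩
  obtain ⟨b, hbK, hab⟩ := hd a 1 one_ne_zero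
  obtain ⟨x, hxA, hbx⟩ := hA₂ b hbK
  refine ⟨x, hxA, ?_⟩
  rw [← sub_add_sub_cancel a b x]
  exact v.map_add_le (hab.trans_eq v.map_one) hbx

/-- If `K` is a dense subfield of `(L,v)` and `A ⊆ K` is an additive complement of
the valuation ring of `(K,v)` (i.e. `A` meets `{v ≤ 1}` only in `0` and every
element of `K` is congruent to an element of `A` modulo the valuation ring),
then `A` is also an additive complement of the valuation ring of `(L,v)`. -/
theorem additive_complement_of_dense {L : Type*} [Field L] {Γ₀ : Type*}
    [LinearOrderedCommGroupWithZero Γ₀] (v : Valuation L Γ₀) (K : Subfield L)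
    (hd : v.DenseSubfield K) (A : AddSubgroup L) (hAK : (A : Set L) ⊆ K)
    (hA₁ : ∀ x ∈ A, v x ≤ 1 → x = 0)
    (hA₂ : ∀ b ∈ K, ∃ x ∈ A, v (b - x) ≤ 1) :
    (∀ x ∈ A, v x ≤ 1 → x = 0) ∧ (∀ a : L, ∃ x ∈ A, v (a - x) ≤ 1) :=
  additive_complement_of_dense_general v K hd A hA₁ hA₂
end

section
/- Let R be a weak complement in a valued field (K,v) and Γ a convex subgroup of the value group vK. Then R_Γ := {r ∈ R : v(r) ∈ Γ ∪ {∞}} is a subring of K, and its quotient field K_Γ satisfies v(K_Γ) = Γ. -/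
/-! The values of nonzero elements of `R` are `≥ 1`, so the ultrametric inequality
`1 ≤ v (a + b) ≤ max (v a) (v b)` together with convexity keeps `R_Γ` closed under addition;
closure under the other ring operations only uses that `Γ` is a group. Every element of
`K_Γ` is a quotient of two elements of `R_Γ`, whence `v(K_Γ) ⊆ Γ`. Conversely, if
`1 < v a = γ ∈ Γ` and `r ∈ R` approximates `a` with `v (a - r) ≤ 1`, then `v r = γ`;
inverses give the values below `1`. -/

variable {Γ₀ : Type*} [LinearOrderedCommGroupWithZero Γ₀]

/-- The value group `vK` of a valuation on a field `K`, as a subgroup of `Γ₀ˣ`. -/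
def Valuation.valueGroup {K : Type*} [Field K] (v : Valuation K Γ₀) : Subgroup Γ₀ˣ where
  carrier := {γ : Γ₀ˣ | ∃ a : K, v a = (γ : Γ₀)}
  one_mem' := ⟨1, map_one v⟩
  mul_mem' := by
    rintro γ δ ⟨a, ha⟩ ⟨b, hb⟩
    exact ⟨a * b, by rw [map_mul, ha, hb]; norm_cast⟩
  inv_mem' := by
    rintro γ ⟨a, ha⟩
    exact ⟨a⁻¹, by rw [map_inv₀, ha]; norm_cast⟩

/-- A subgroup of `Γ₀ˣ` is convex if with any element it contains everything
between it and its inverse. -/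
def Subgroup.IsConvex (Γ : Subgroup Γ₀ˣ) : Prop :=
  ∀ γ ∈ Γ, ∀ δ : Γ₀ˣ, 1 ≤ δ → δ ≤ γ → δ ∈ Γ

namespace Valuation

variable {K : Type*} [Field K] (v : Valuation K Γ₀) (Γ : Subgroup Γ₀ˣ)

def withValueIn : Set K := {x | x = 0 ∨ ∃ γ ∈ Γ, v x = (γ : Γ₀)}

variable {v Γ}

theorem zero_mem_withValueIn : (0 : K) ∈ v.withValueIn Γ := Or.inl rfl

theorem one_mem_withValueIn : (1 : K) ∈ v.withValueIn Γ :=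
  Or.inr ⟨1, Γ.one_mem, map_one v⟩

theorem neg_mem_withValueIn {x : K} (hx : x ∈ v.withValueIn Γ) : -x ∈ v.withValueIn Γ := by
  rcases hx with rfl | ⟨γ, hγ, hxγ⟩
  · exact Or.inl neg_zero
  · exact Or.inr ⟨γ, hγ, by rwa [v.map_neg]⟩

theorem mul_mem_withValueIn {x y : K} (hx : x ∈ v.withValueIn Γ) (hy : y ∈ v.withValueIn Γ) :
    x * y ∈ v.withValueIn Γ := by
  rcases hx with rfl | ⟨γ, hγ, hxγ⟩
  · exact Or.inl (zero_mul y)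
  rcases hy with rfl | ⟨δ, hδ, hyδ⟩
  · exact Or.inl (mul_zero x)
  · exact Or.inr ⟨γ * δ, Γ.mul_mem hγ hδ, by rw [map_mul, hxγ, hyδ, Units.val_mul]⟩

theorem div_mem_withValueIn {x y : K} (hx : x ∈ v.withValueIn Γ) (hy : y ∈ v.withValueIn Γ) :
    x / y ∈ v.withValueIn Γ := by
  rcases hx with rfl | ⟨γ, hγ, hxγ⟩
  · exact Or.inl (zero_div y)
  rcases hy with rfl | ⟨δ, hδ, hyδ⟩
  · exact Or.inl (div_zero x)
  · exact Or.inr ⟨γ / δ, div_mem hγ hδ, by rw [map_div₀, hxγ, hyδ, Units.val_div_eq_div_val]⟩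

theorem mem_withValueIn_of_one_le_of_le (hconv : Γ.IsConvex) {x y : K}
    (hy : y ∈ v.withValueIn Γ) (h1 : 1 ≤ v x) (hxy : v x ≤ v y) : x ∈ v.withValueIn Γ := by
  have hvx : v x ≠ 0 := (zero_lt_one.trans_le h1).ne'
  rcases hy with rfl | ⟨γ, hγ, hyγ⟩
  · exact absurd (le_zero_iff.mp (hxy.trans_eq v.map_zero)) hvx
  refine Or.inr ⟨Units.mk0 (v x) hvx, hconv γ hγ _ ?_ ?_, rfl⟩
  · rwa [← Units.val_le_val, Units.val_one, Units.val_mk0]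
  · rwa [← Units.val_le_val, Units.val_mk0, ← hyγ]

theorem add_mem_withValueIn (hconv : Γ.IsConvex) {x y : K}
    (hx : x ∈ v.withValueIn Γ) (hy : y ∈ v.withValueIn Γ) (h1 : x + y ≠ 0 → 1 ≤ v (x + y)) :
    x + y ∈ v.withValueIn Γ := by
  by_cases hxy : x + y = 0
  · exact Or.inl hxy
  rcases max_choice (v x) (v y) with hmax | hmax
  · exact mem_withValueIn_of_one_le_of_le hconv hx (h1 hxy) (hmax ▸ v.map_add x y)
  · exact mem_withValueIn_of_one_le_of_le hconv hy (h1 hxy) (hmax ▸ v.map_add x y)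

variable (v Γ)

def subringWithValueIn (R : Subring K) (hR : ∀ r ∈ R, r ≠ 0 → 1 ≤ v r) (hconv : Γ.IsConvex) :
    Subring K where
  carrier := (R : Set K) ∩ v.withValueIn Γ
  zero_mem' := ⟨R.zero_mem, zero_mem_withValueIn⟩
  one_mem' := ⟨R.one_mem, one_mem_withValueIn⟩
  neg_mem' := fun ⟨hR', hΓ⟩ => ⟨R.neg_mem hR', neg_mem_withValueIn hΓ⟩
  mul_mem' := fun ⟨hxR, hxΓ⟩ ⟨hyR, hyΓ⟩ => ⟨R.mul_mem hxR hyR, mul_mem_withValueIn hxΓ hyΓ⟩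
  add_mem' := fun ⟨hxR, hxΓ⟩ ⟨hyR, hyΓ⟩ =>
    ⟨R.add_mem hxR hyR, add_mem_withValueIn hconv hxΓ hyΓ (hR _ (R.add_mem hxR hyR))⟩

variable {v Γ}

theorem closure_subset_withValueIn {S : Subring K} (hS : (S : Set K) ⊆ v.withValueIn Γ) :
    (Subfield.closure (S : Set K) : Set K) ⊆ v.withValueIn Γ := by
  intro x hx
  obtain ⟨y, hy, z, hz, rfl⟩ := Subfield.mem_closure_iff.mp hx
  rw [Subring.closure_eq] at hy hz
  exact div_mem_withValueIn (hS hy) (hS hz)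

theorem exists_mem_map_eq_of_one_lt {R : Set K} (hR : ∀ a : K, ∃ r ∈ R, v (a - r) ≤ 1)
    {a : K} (ha : 1 < v a) : ∃ r ∈ R, v r = v a := by
  obtain ⟨r, hr, har⟩ := hR a
  exact ⟨r, hr, v.map_eq_of_sub_lt (by rw [v.map_sub_swap]; exact har.trans_lt ha)⟩

end Valuation

/-- Let `R` be a weak complement in a valued field `(K,v)` (every nonzero `r ∈ R`
has additive value `≤ 0`, i.e. `1 ≤ v r` multiplicatively, and every `a ∈ K` is
within the valuation ring of some `r ∈ R`), and let `Γ` be a convex subgroup of the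
value group `vK`.  Then `R_Γ = {r ∈ R : v r ∈ Γ ∪ {∞}}` is a subring of `K`, and its
quotient field `K_Γ` satisfies `v(K_Γ) = Γ`. -/
theorem weak_complement_piece_subring_and_valueGroup {K : Type*} [Field K]
    (v : Valuation K Γ₀) (R : Subring K)
    (hw₁ : ∀ r ∈ R, r ≠ 0 → 1 ≤ v r)
    (hw₂ : ∀ a : K, ∃ r ∈ R, v (a - r) ≤ 1)
    (Γ : Subgroup Γ₀ˣ) (hconv : Γ.IsConvex) (hΓ : Γ ≤ v.valueGroup) :
    ∃ S : Subring K,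
      (S : Set K) = {r : K | r ∈ R ∧ (r = 0 ∨ ∃ γ ∈ Γ, v r = (γ : Γ₀))} ∧
      (∀ x ∈ Subfield.closure (S : Set K), x ≠ 0 → ∃ γ ∈ Γ, v x = (γ : Γ₀)) ∧
      (∀ γ ∈ Γ, ∃ x ∈ Subfield.closure (S : Set K), v x = (γ : Γ₀)) := by
  set S := v.subringWithValueIn Γ R hw₁ hconv
  have value_one_lt :
      ∀ γ ∈ Γ, 1 < γ → ∃ x ∈ Subfield.closure (S : Set K), v x = (γ : Γ₀) := by
    intro γ hγ hγ1
    obtain ⟨a, ha⟩ := hΓ hγ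
    obtain ⟨r, hrR, hr⟩ :=
      Valuation.exists_mem_map_eq_of_one_lt hw₂ (ha ▸ (by exact_mod_cast hγ1 : (1 : Γ₀) < γ))
    exact ⟨r, Subfield.subset_closure ⟨hrR, Or.inr ⟨γ, hγ, hr.trans ha⟩⟩, hr.trans ha⟩
  refine ⟨S, rfl, fun x hx hx0 =>
    (Valuation.closure_subset_withValueIn Set.inter_subset_right hx).resolve_left hx0, fun γ hγ => ?_⟩
  rcases lt_trichotomy γ 1 with hlt | rfl | hgt
  · obtain ⟨x, hx, hvx⟩ := value_one_lt γ⁻¹ (Γ.inv_mem hγ) (one_lt_inv'.mpr hlt)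
    exact ⟨x⁻¹, Subfield.inv_mem _ hx, by rw [map_inv₀, hvx, Units.val_inv_eq_inv_val, inv_inv]⟩
  · exact ⟨1, Subfield.one_mem _, map_one v⟩
  · exact value_one_lt γ hγ hgt
end

section
/- Let R be a weak complement in a valued field (K,v) and Γ a non-trivial convex subgroup of vK, with associated coarsening v_Γ (whose value group is vK/Γ) and induced valuation v̄_Γ on the residue field Kv_Γ. Then the image of the field K_Γ = Quot(R_Γ) under the residue map of v_Γ is dense in (Kv_Γ, v̄_Γ). -/
/-! An element of `R` within `1` of some `c` with `1 < v c ∈ Γ` has value `v c`, so with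
inverses the elements of `K_Γ` realise every value in `Γ`. After dividing `a` by an element of
`K_Γ` of value `min δ γ₀`, the approximation `v (a - r) ≤ 1` provided by the weak complement
becomes `v (a - b) ≤ δ`. The approximant `r` lies in `R_Γ` because its value is squeezed
between `1` and an element of `Γ`, and `Γ` is convex. -/

variable {Γ₀ : Type*} [LinearOrderedCommGroupWithZero Γ₀]

/-- The paper's `R_Γ`. -/
def Subring.withValuesIn {K : Type*} [Field K] (R : Subring K) (v : Valuation K Γ₀)
    (Γ : Subgroup Γ₀ˣ) : Set K :=
  {r : K | r ∈ R ∧ (r = 0 ∨ ∃ γ ∈ Γ, v r = (γ : Γ₀))}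

namespace Subring

variable {K : Type*} [Field K] {v : Valuation K Γ₀} {R : Subring K} {Γ : Subgroup Γ₀ˣ}

lemma exists_mem_valuation_eq_of_one_lt (hw₂ : ∀ a : K, ∃ r ∈ R, v (a - r) ≤ 1)
    {γ : Γ₀ˣ} (hγ : γ ∈ v.valueGroup) (h1 : 1 < (γ : Γ₀)) : ∃ r ∈ R, v r = γ := by
  obtain ⟨c, hc⟩ := hγ
  obtain ⟨r, hr, hcr⟩ := hw₂ c
  refine ⟨r, hr, ?_⟩
  have hlt : v (c - r) < v c := hc ▸ hcr.trans_lt h1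
  simpa [hc] using v.map_sub_eq_of_lt_left hlt

lemma mem_withValuesIn_of_valuation_eq {r : K} (hr : r ∈ R) {γ : Γ₀ˣ} (hγ : γ ∈ Γ)
    (hrγ : v r = γ) : r ∈ R.withValuesIn v Γ :=
  ⟨hr, Or.inr ⟨γ, hγ, hrγ⟩⟩

lemma exists_mem_closure_withValuesIn_valuation_eq (hw₂ : ∀ a : K, ∃ r ∈ R, v (a - r) ≤ 1)
    (hΓ : Γ ≤ v.valueGroup) {γ : Γ₀ˣ} (hγ : γ ∈ Γ) :
    ∃ b ∈ Subfield.closure (R.withValuesIn v Γ), v b = γ := by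
  rcases lt_trichotomy γ 1 with hlt | rfl | hgt
  · have hγ' : γ⁻¹ ∈ Γ := Γ.inv_mem hγ
    obtain ⟨r, hr, hrv⟩ := exists_mem_valuation_eq_of_one_lt hw₂ (hΓ hγ')
      (by exact_mod_cast one_lt_inv'.mpr hlt)
    refine ⟨r⁻¹, Subfield.inv_mem _
      (Subfield.subset_closure (mem_withValuesIn_of_valuation_eq hr hγ' hrv)), ?_⟩
    rw [map_inv₀, hrv, Units.val_inv_eq_inv_val, inv_inv]
  · exact ⟨1, Subfield.one_mem _, by simp⟩
  · obtain ⟨r, hr, hrv⟩ := exists_mem_valuation_eq_of_one_lt hw₂ (hΓ hγ) (by exact_mod_cast hgt)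
    exact ⟨r, Subfield.subset_closure (mem_withValuesIn_of_valuation_eq hr hγ hrv), hrv⟩

lemma mem_withValuesIn_of_valuation_le (hw₁ : ∀ r ∈ R, r ≠ 0 → 1 ≤ v r)
    (hconv : Γ.IsConvex) {r : K} (hr : r ∈ R) {γ : Γ₀ˣ} (hγ : γ ∈ Γ) (hrγ : v r ≤ γ) :
    r ∈ R.withValuesIn v Γ := by
  rcases eq_or_ne r 0 with rfl | hr0
  · exact ⟨hr, Or.inl rfl⟩
  have hvr : v r ≠ 0 := v.ne_zero_iff.mpr hr0
  refine mem_withValuesIn_of_valuation_eq hr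
    (hconv γ hγ (Units.mk0 (v r) hvr) ?_ ?_) rfl
  · exact Units.val_le_val.mp (hw₁ r hr hr0)
  · exact Units.val_le_val.mp hrγ

lemma exists_mem_withValuesIn_valuation_sub_le_one (hw₁ : ∀ r ∈ R, r ≠ 0 → 1 ≤ v r)
    (hw₂ : ∀ a : K, ∃ r ∈ R, v (a - r) ≤ 1) (hconv : Γ.IsConvex) {a : K} {γ : Γ₀ˣ}
    (hγ : γ ∈ Γ) (ha : v a ≤ γ) : ∃ r ∈ R.withValuesIn v Γ, v (a - r) ≤ 1 := by
  obtain ⟨r, hr, har⟩ := hw₂ a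
  have hmax : max γ 1 ∈ Γ := by
    rcases max_choice γ 1 with h | h <;> rw [h]
    exacts [hγ, Γ.one_mem]
  have hrv : v r ≤ (max γ 1 : Γ₀ˣ) := by
    rw [Units.max_val, Units.val_one, ← sub_sub_cancel a r]
    exact v.map_sub_le (ha.trans (le_max_left _ _)) (har.trans (le_max_right _ _))
  exact ⟨r, mem_withValuesIn_of_valuation_le hw₁ hconv hr hmax hrv, har⟩

end Subring

open Subring in
theorem weak_complement_piece_dense_in_residue_field_general {K : Type*} [Field K]
    (v : Valuation K Γ₀) (R : Subring K)
    (hw₁ : ∀ r ∈ R, r ≠ 0 → 1 ≤ v r)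
    (hw₂ : ∀ a : K, ∃ r ∈ R, v (a - r) ≤ 1)
    (Γ : Subgroup Γ₀ˣ) (hconv : Γ.IsConvex) (hΓ : Γ ≤ v.valueGroup) :
    ∀ a : K, (∃ γ₀ ∈ Γ, v a ≤ (γ₀ : Γ₀)) → ∀ δ ∈ Γ,
      ∃ b ∈ Subfield.closure {r : K | r ∈ R ∧ (r = 0 ∨ ∃ γ ∈ Γ, v r = (γ : Γ₀))},
        v (a - b) ≤ (δ : Γ₀) := by
  rintro a ⟨γ₀, hγ₀, ha⟩ δ hδ
  have hγ : min δ γ₀ ∈ Γ := by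
    rcases min_choice δ γ₀ with h | h <;> rw [h]
    exacts [hδ, hγ₀]
  set γ := min δ γ₀
  obtain ⟨c, hc, hcv⟩ := exists_mem_closure_withValuesIn_valuation_eq hw₂ hΓ hγ
  have hc0 : c ≠ 0 := v.ne_zero_iff.mp (hcv ▸ γ.ne_zero)
  have hac : v (a / c) ≤ (γ₀ / γ : Γ₀ˣ) := by
    rw [map_div₀, hcv, Units.val_div_eq_div_val]
    exact div_le_div_of_nonneg_right ha zero_le
  obtain ⟨r, hr, har⟩ := exists_mem_withValuesIn_valuation_sub_le_one hw₁ hw₂ hconv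
    (Γ.div_mem hγ₀ hγ) hac
  refine ⟨c * r, Subfield.mul_mem _ hc (Subfield.subset_closure hr), ?_⟩
  calc v (a - c * r) = γ * v (a / c - r) := by
        rw [← hcv, ← map_mul, mul_sub, mul_div_cancel₀ _ hc0]
    _ ≤ γ := mul_le_of_le_one_right' har
    _ ≤ δ := Units.val_le_val.mpr (min_le_left _ _)

/-- Let `R` be a weak complement in a valued field `(K,v)` and `Γ` a non-trivial
convex subgroup of `vK`, with associated coarsening `v_Γ` and induced valuation
`v̄_Γ` on the residue field `Kv_Γ`.  Then the image of `K_Γ = Quot(R_Γ)` under the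
residue map of `v_Γ` is dense in `(Kv_Γ, v̄_Γ)`.  Unravelled upstairs: for every `a`
in the valuation ring of `v_Γ` (i.e. `v a ≤ γ₀` for some `γ₀ ∈ Γ`) and every
`δ ∈ Γ`, there is `b ∈ K_Γ` whose residue is `δ`-close to that of `a`, i.e.
`v (a - b) ≤ δ` (additively `v(a - b) ≥ δ`). -/
theorem weak_complement_piece_dense_in_residue_field {K : Type*} [Field K]
    (v : Valuation K Γ₀) (R : Subring K)
    (hw₁ : ∀ r ∈ R, r ≠ 0 → 1 ≤ v r)
    (hw₂ : ∀ a : K, ∃ r ∈ R, v (a - r) ≤ 1)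
    (Γ : Subgroup Γ₀ˣ) (hconv : Γ.IsConvex) (hΓ : Γ ≤ v.valueGroup) (hne : Γ ≠ ⊥) :
    ∀ a : K, (∃ γ₀ ∈ Γ, v a ≤ (γ₀ : Γ₀)) → ∀ δ ∈ Γ,
      ∃ b ∈ Subfield.closure {r : K | r ∈ R ∧ (r = 0 ∨ ∃ γ ∈ Γ, v r = (γ : Γ₀))},
        v (a - b) ≤ (δ : Γ₀) :=
  weak_complement_piece_dense_in_residue_field_general v R hw₁ hw₂ Γ hconv hΓ
end
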